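/- Let y be a minimal integral vector in the supermodular polyhedron Q = {y ∈ ℤ^S : y(X) ≥ p(X) for all X ⊆ S} subject to y ≥ x for a given integral vector x ∉ B ∩ ℤ^S with x(S) = p(S), and let S₊ be the largest y-tight set (i.e., largest X with y(X) = p(X)). Then ∅ ≠ S₊ ≠ S, and y(s) = x(s) for every s ∈ S − S₊. -/

import Mathlib

open Finset

variable {α : Type*} [Fintype α] [DecidableEq α]

def Supermodular (p : Finset α → EReal) : Prop :=
  ∀ X Y : Finset α, p X + p Y ≤ p (X ∩ Y) + p (X ∪ Y)

/-- `p` takes values in `ℤ ∪ {−∞}`. -/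
def IntegerValued (p : Finset α → EReal) : Prop :=
  ∀ X : Finset α, p X = ⊥ ∨ ∃ n : ℤ, p X = ((n : ℝ) : EReal)

/-- `x` belongs to the base-polyhedron `B'(p)`:
`x(S) = p(S)` and `x(Z) ≥ p(Z)` for every `Z ⊆ S`. -/
def memB (p : Finset α → EReal) (x : α → ℝ) : Prop :=
  ((∑ s, x s : ℝ) : EReal) = p Finset.univ ∧
    ∀ Z : Finset α, p Z ≤ ((∑ s ∈ Z, x s : ℝ) : EReal)

/-- `x` is an integral element of the base-polyhedron `B'(p)` (a member of the
M-convex set `B ∩ ℤ^S`). -/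
def memBZ (p : Finset α → EReal) (x : α → ℤ) : Prop :=
  ((((∑ s, x s : ℤ) : ℝ)) : EReal) = p Finset.univ ∧
    ∀ Z : Finset α, p Z ≤ ((((∑ s ∈ Z, x s : ℤ) : ℝ)) : EReal)

/-- Lexicographic comparison `l1 ≤_lex l2` of lists. -/
def lexLE {β : Type*} [LT β] (l1 l2 : List β) : Prop :=
  l1 = l2 ∨ List.Lex (· < ·) l1 l2

/-- The components of `x` sorted in decreasing order. -/
noncomputable def sortDescR (x : α → ℝ) : List ℝ :=
  (Multiset.sort (Finset.univ.val.map x) (· ≤ ·)).reverse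

/-- The components of the integral vector `x` sorted in decreasing order. -/
def sortDescZ (x : α → ℤ) : List ℤ :=
  (Multiset.sort (Finset.univ.val.map x) (· ≤ ·)).reverse

/-- `m` is a decreasingly minimal element of the base-polyhedron `B'(p)`. -/
def DecMinR (p : Finset α → EReal) (m : α → ℝ) : Prop :=
  memB p m ∧ ∀ y : α → ℝ, memB p y → lexLE (sortDescR m) (sortDescR y)

/-- `m` is a decreasingly minimal element of the M-convex set `B'(p) ∩ ℤ^S`. -/
def DecMinZ (p : Finset α → EReal) (m : α → ℤ) : Prop :=
  memBZ p m ∧ ∀ y : α → ℤ, memBZ p y → lexLE (sortDescZ m) (sortDescZ y)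

/-!
Since `y` is minimal, lowering a coordinate `s` with `y s > x s` by one leaves `Q`; the violated
inequality `y(X) - 1 < p(X) ≤ y(X)` is tight for `y` because `p` is integer-valued, so `s ∈ X ⊆ S₊`.
Hence `y = x` outside `S₊`. Such an `s` exists because `x ∉ Q`, so `S₊ ≠ ∅`; and `S₊ = S` would
give `y(S) = p(S) = x(S)`, hence `y = x ∈ B`.
-/

def MemQ (p : Finset α → EReal) (y : α → ℤ) : Prop :=
  ∀ X : Finset α, p X ≤ ((((∑ s ∈ X, y s : ℤ) : ℝ)) : EReal)

def IsTight (p : Finset α → EReal) (y : α → ℤ) (X : Finset α) : Prop :=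
  p X = ((((∑ s ∈ X, y s : ℤ) : ℝ)) : EReal)

theorem EReal.eq_intCast_of_sub_one_lt_of_le {v : EReal}
    (hv : v = ⊥ ∨ ∃ n : ℤ, v = ((n : ℝ) : EReal)) {m : ℤ}
    (hlt : (((m - 1 : ℤ) : ℝ) : EReal) < v) (hle : v ≤ ((m : ℝ) : EReal)) :
    v = ((m : ℝ) : EReal) := by
  rcases hv with rfl | ⟨n, rfl⟩
  · exact absurd hlt not_lt_bot
  · have h₁ : m - 1 < n := by exact_mod_cast hlt
    have h₂ : n ≤ m := by exact_mod_cast hle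
    rw [show n = m by omega]

theorem exists_isTight_mem_of_lt {p : Finset α → EReal} (hint : IntegerValued p)
    {x y : α → ℤ} (hyQ : MemQ p y) (hyx : ∀ s, x s ≤ y s)
    (hymin : ∀ y' : α → ℤ, MemQ p y' → (∀ s, x s ≤ y' s) → (∀ s, y' s ≤ y s) → y' = y)
    {s : α} (hs : x s < y s) : ∃ X, s ∈ X ∧ IsTight p y X := by
  set y' := Function.update y s (y s - 1)
  have hxy' : x ≤ y' := le_update_iff.2 ⟨by omega, fun t _ => hyx t⟩
  have hy'y : y' < y := update_lt_self_iff.2 (by omega)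
  obtain ⟨X, hX⟩ : ∃ X, ¬ p X ≤ ((((∑ t ∈ X, y' t : ℤ) : ℝ)) : EReal) := by
    by_contra! h
    exact hy'y.ne (hymin y' h hxy' hy'y.le)
  have hsX : s ∈ X := by
    by_contra hsX
    exact hX (by simpa only [y', sum_update_of_notMem hsX y] using hyQ X)
  have hsum : ∑ t ∈ X, y' t = ∑ t ∈ X, y t - 1 := by
    rw [sum_update_of_mem hsX, sum_eq_add_sum_sdiff_singleton_of_mem hsX y]
    ring
  rw [not_le, hsum] at hX
  exact ⟨X, hsX, EReal.eq_intCast_of_sub_one_lt_of_le (hint X) hX (hyQ X)⟩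

omit [DecidableEq α] in
theorem eq_of_isTight_univ {p : Finset α → EReal} {x y : α → ℤ}
    (hx : ((((∑ s, x s : ℤ) : ℝ)) : EReal) = p univ) (hxy : ∀ s, x s ≤ y s)
    (hy : IsTight p y univ) : y = x := by
  have hsum : ∑ s, x s = ∑ s, y s := by exact_mod_cast hx.trans hy
  funext s
  exact ((sum_eq_sum_iff_of_le fun t _ => hxy t).1 hsum s (mem_univ s)).symm

theorem largest_tight_set_properties_general (p : Finset α → EReal)
    (hint : IntegerValued p)
    (pS : ℤ) (hpS : p (Finset.univ : Finset α) = ((pS : ℝ) : EReal))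
    (x : α → ℤ) (hxS : (∑ s, x s) = pS) (hxB : ¬ memBZ p x)
    (y : α → ℤ)
    (hyQ : ∀ X : Finset α, p X ≤ ((((∑ s ∈ X, y s : ℤ) : ℝ)) : EReal))
    (hyx : ∀ s, x s ≤ y s)
    (hymin : ∀ y' : α → ℤ,
      (∀ X : Finset α, p X ≤ ((((∑ s ∈ X, y' s : ℤ) : ℝ)) : EReal)) →
      (∀ s, x s ≤ y' s) → (∀ s, y' s ≤ y s) → y' = y)
    (Splus : Finset α)
    (htight : p Splus = ((((∑ s ∈ Splus, y s : ℤ) : ℝ)) : EReal))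
    (hlargest : ∀ X : Finset α,
      p X = ((((∑ s ∈ X, y s : ℤ) : ℝ)) : EReal) → X ⊆ Splus) :
    Splus ≠ ∅ ∧ Splus ≠ Finset.univ ∧ ∀ s ∈ Finset.univ \ Splus, y s = x s := by
  have hx : ((((∑ s, x s : ℤ) : ℝ)) : EReal) = p univ := by rw [hxS, hpS]
  have hxQ : ¬ MemQ p x := fun h => hxB ⟨hx, h⟩
  have mem_of_lt : ∀ s, x s < y s → s ∈ Splus := fun s hs =>
    have ⟨X, hsX, hX⟩ := exists_isTight_mem_of_lt hint hyQ hyx hymin hs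
    hlargest X hX hsX
  have hxy : x ≠ y := by rintro rfl; exact hxQ hyQ
  obtain ⟨-, s₀, hs₀⟩ := Pi.lt_def.1 (lt_of_le_of_ne hyx hxy)
  refine ⟨ne_empty_of_mem (mem_of_lt s₀ hs₀), ?_, fun s hs => ?_⟩
  · rintro rfl
    exact hxQ (eq_of_isTight_univ hx hyx htight ▸ hyQ)
  · by_contra hne
    exact (mem_sdiff.1 hs).2 (mem_of_lt s (lt_of_le_of_ne (hyx s) (Ne.symm hne)))

/-- If `y` is a componentwise-minimal integral element of the supermodular polyhedron
`Q = {y : y(X) ≥ p(X) ∀X}` above a vector `x ∉ B ∩ ℤ^S` with `x(S) = p(S)`, and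
`S₊` is the largest `y`-tight set, then `∅ ≠ S₊ ≠ S` and `y = x` outside `S₊`. -/
theorem largest_tight_set_properties (p : Finset α → EReal) (hp0 : p ∅ = 0)
    (hsup : Supermodular p) (hint : IntegerValued p)
    (pS : ℤ) (hpS : p (Finset.univ : Finset α) = ((pS : ℝ) : EReal))
    (x : α → ℤ) (hxS : (∑ s, x s) = pS) (hxB : ¬ memBZ p x)
    (y : α → ℤ)
    (hyQ : ∀ X : Finset α, p X ≤ ((((∑ s ∈ X, y s : ℤ) : ℝ)) : EReal))
    (hyx : ∀ s, x s ≤ y s)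
    (hymin : ∀ y' : α → ℤ,
      (∀ X : Finset α, p X ≤ ((((∑ s ∈ X, y' s : ℤ) : ℝ)) : EReal)) →
      (∀ s, x s ≤ y' s) → (∀ s, y' s ≤ y s) → y' = y)
    (Splus : Finset α)
    (htight : p Splus = ((((∑ s ∈ Splus, y s : ℤ) : ℝ)) : EReal))
    (hlargest : ∀ X : Finset α,
      p X = ((((∑ s ∈ X, y s : ℤ) : ℝ)) : EReal) → X ⊆ Splus) :
    Splus ≠ ∅ ∧ Splus ≠ Finset.univ ∧ ∀ s ∈ Finset.univ \ Splus, y s = x s :=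
  largest_tight_set_properties_general p hint pS hpS x hxS hxB y hyQ hyx hymin Splus htight hlargest
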